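/- Let Ω ⊆ ℝ^n be a convex set, let Q ∈ ℝ^{n×n} be a positive definite matrix, let r : ℝ^n → ℝ be differentiable and 1-strongly convex on Ω with respect to ‖·‖_Q, let Ψ : ℝ^n → ℝ be convex and differentiable, let f : ℝ^n → ℝ, let x_t ∈ Ω and g_t, g̃_t ∈ ℝ^n be such that g_t is a subgradient of f at x̂_t over Ω, where x̂_t is a minimizer over Ω of x ↦ ⟨g̃_t, x⟩ + Ψ(x) + B_r(x, x_t), and let x_{t+1} be a minimizer over Ω of x ↦ ⟨g_t, x⟩ + Ψ(x) + B_r(x, x_t). Then for every x* ∈ Ω, (f(x̂_t) + Ψ(x̂_t)) − (f(x*) + Ψ(x*)) ≤ (1/2)‖g_t − g̃_t‖_{Q⁻¹}² + B_r(x*, x_t) − B_r(x*, x_{t+1}). -/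

import Mathlib

/-
Each proximal step `x⁺ ∈ argmin_Ω ⟪g, ·⟫ + Ψ + B_r(·, x_t)` satisfies
`⟪g, x⁺ - u⟫ + Ψ x⁺ - Ψ u ≤ B_r(u, x_t) - B_r(u, x⁺) - B_r(x⁺, x_t)` for `u ∈ Ω`:
first-order optimality of the smooth part against the convex `Ψ`, combined with the three-point
identity of the Bregman divergence. Apply this to `x_{t+1}` against `x*` and to `x̂_t` against
`x_{t+1}`, and add the subgradient inequality for `f` at `x̂_t`. What remains is the cross term
`⟪g_t - g̃_t, x̂_t - x_{t+1}⟫ ≤ ½‖g_t - g̃_t‖²_{Q⁻¹} + ½‖x̂_t - x_{t+1}‖²_Q` (Young), whose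
second half is paid for by `B_r(x_{t+1}, x̂_t)` through strong convexity, while
`B_r(x̂_t, x_t) ≥ 0` is dropped.
-/

open scoped RealInnerProductSpace
open Finset

noncomputable def breg {n : ℕ} (ψ : EuclideanSpace ℝ (Fin n) → ℝ)
    (Dψ : EuclideanSpace ℝ (Fin n) → EuclideanSpace ℝ (Fin n))
    (x y : EuclideanSpace ℝ (Fin n)) : ℝ :=
  ψ x - ψ y - ⟪Dψ y, x - y⟫

noncomputable def quadForm {n : ℕ} (Q : Matrix (Fin n) (Fin n) ℝ)
    (x : EuclideanSpace ℝ (Fin n)) : ℝ :=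
  ∑ i, ∑ j, x i * Q i j * x j

open Matrix

theorem ConvexOn.sub_le_of_isMinOn_add {E : Type*} [NormedAddCommGroup E] [NormedSpace ℝ E]
    {s : Set E} {h Ψ : E → ℝ} {h' : E →L[ℝ] ℝ} {a u : E}
    (hΨ : ConvexOn ℝ s Ψ) (hmin : IsMinOn (fun x => h x + Ψ x) s a)
    (hh : HasFDerivAt h h' a) (ha : a ∈ s) (hu : u ∈ s) :
    Ψ a - Ψ u ≤ h' (u - a) := by
  -- `φ t ≥ φ 0` on `[0, 1]` since `Ψ` lies below its chords; `φ' 0 = h' (u - a) - (Ψ a - Ψ u)`.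
  set φ : ℝ → ℝ := fun t => h (a + t • (u - a)) - t * (Ψ a - Ψ u)
  have hφ : HasDerivAt φ (h' (u - a) - (Ψ a - Ψ u)) 0 := by
    have hline : HasDerivAt (fun t : ℝ => a + t • (u - a)) (u - a) 0 := by
      simpa using ((hasDerivAt_id (0 : ℝ)).smul_const (u - a)).const_add a
    have hh0 : HasFDerivAt h h' (a + (0 : ℝ) • (u - a)) := by simpa using hh
    exact (hh0.comp_hasDerivAt 0 hline).sub (hasDerivAt_mul_const _)
  have hφ_min : IsMinOn φ (Set.Icc 0 1) 0 := by
    rintro t ⟨ht₀, ht₁⟩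
    have hseg : a + t • (u - a) = (1 - t) • a + t • u := by module
    have hmem := hΨ.1 ha hu (sub_nonneg.2 ht₁) ht₀ (sub_add_cancel 1 t)
    have hchord := hΨ.2 ha hu (sub_nonneg.2 ht₁) ht₀ (sub_add_cancel 1 t)
    have hle := hmin (hseg ▸ hmem)
    simp only [smul_eq_mul] at hchord
    simp only [Set.mem_ofPred_eq, φ, hseg, zero_smul, add_zero, zero_mul, sub_zero] at hle ⊢
    linarith
  have := hφ_min.localize.hasFDerivWithinAt_nonneg hφ.hasFDerivAt.hasFDerivWithinAt
    (mem_posTangentConeAt_of_segment_subset (by simp [segment_eq_Icc]) : (1 : ℝ) ∈ _)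
  rw [ContinuousLinearMap.toSpanSingleton_apply, one_smul] at this
  linarith

theorem Matrix.PosDef.dotProduct_le_half_add {ι : Type*} [Fintype ι] [DecidableEq ι]
    {Q : Matrix ι ι ℝ} (hQ : Q.PosDef) (a b : ι → ℝ) :
    a ⬝ᵥ b ≤ (1/2) * (a ⬝ᵥ Q⁻¹ *ᵥ a) + (1/2) * (b ⬝ᵥ Q *ᵥ b) := by
  set c := Q⁻¹ *ᵥ a
  have hQc : Q *ᵥ c = a := by
    rw [mulVec_mulVec, mul_nonsing_inv Q hQ.det_pos.ne'.isUnit, one_mulVec]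
  have hsq := hQ.posSemidef.dotProduct_mulVec_nonneg (b - c)
  have hsymm : Qᵀ = Q := hQ.isHermitian
  have hcb : c ⬝ᵥ Q *ᵥ b = a ⬝ᵥ b := by
    rw [dotProduct_mulVec, ← mulVec_transpose, hsymm, hQc]
  simp only [star_trivial, sub_dotProduct, mulVec_sub, dotProduct_sub, hcb, hQc] at hsq
  rw [dotProduct_comm b a, dotProduct_comm c a] at hsq
  linarith

section Euclidean

variable {n : ℕ}

local notation "𝔼" => EuclideanSpace ℝ (Fin n)

theorem quadForm_eq_dotProduct (Q : Matrix (Fin n) (Fin n) ℝ) (x : 𝔼) :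
    quadForm Q x = x.ofLp ⬝ᵥ Q *ᵥ x.ofLp := by
  simp only [quadForm, dotProduct, mulVec, mul_sum, mul_assoc]

theorem quadForm_neg (Q : Matrix (Fin n) (Fin n) ℝ) (x : 𝔼) : quadForm Q (-x) = quadForm Q x := by
  simp [quadForm_eq_dotProduct, mulVec_neg]

theorem quadForm_nonneg {Q : Matrix (Fin n) (Fin n) ℝ} (hQ : Q.PosSemidef) (x : 𝔼) :
    0 ≤ quadForm Q x := by
  simpa [quadForm_eq_dotProduct] using hQ.dotProduct_mulVec_nonneg x.ofLp

theorem inner_le_half_quadForm_inv_add {Q : Matrix (Fin n) (Fin n) ℝ} (hQ : Q.PosDef) (a b : 𝔼) :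
    ⟪a, b⟫ ≤ (1/2) * quadForm Q⁻¹ a + (1/2) * quadForm Q b := by
  rw [quadForm_eq_dotProduct, quadForm_eq_dotProduct, EuclideanSpace.inner_eq_star_dotProduct,
    star_trivial, dotProduct_comm]
  exact hQ.dotProduct_le_half_add _ _

theorem breg_nonneg_of_strongConvex {Ω : Set 𝔼} {Q : Matrix (Fin n) (Fin n) ℝ}
    (hQ : Q.PosSemidef) {r : 𝔼 → ℝ} {Dr : 𝔼 → 𝔼}
    (hstrong : ∀ x ∈ Ω, ∀ y ∈ Ω, (1/2) * quadForm Q (x - y) ≤ breg r Dr x y)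
    {x y : 𝔼} (hx : x ∈ Ω) (hy : y ∈ Ω) : 0 ≤ breg r Dr x y :=
  (mul_nonneg (by norm_num) (quadForm_nonneg hQ _)).trans (hstrong x hx y hy)

theorem breg_three_point (r : 𝔼 → ℝ) (Dr : 𝔼 → 𝔼) (u x y : 𝔼) :
    breg r Dr u y - breg r Dr u x - breg r Dr x y = ⟪Dr x - Dr y, u - x⟫ := by
  simp only [breg, inner_sub_left, inner_sub_right]
  ring

theorem hasFDerivAt_inner_add_breg {r : 𝔼 → ℝ} {Dr : 𝔼 → 𝔼} {x : 𝔼}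
    (hr : HasGradientAt r (Dr x) x) (g y : 𝔼) :
    HasFDerivAt (fun z => ⟪g, z⟫ + breg r Dr z y)
      (InnerProductSpace.toDual ℝ 𝔼 (g + (Dr x - Dr y))) x := by
  have hfun : (fun z => ⟪g, z⟫ + breg r Dr z y) =
      fun z => r z + ⟪g - Dr y, z⟫ - (r y - ⟪Dr y, y⟫) := by
    funext z
    simp only [breg, inner_sub_left, inner_sub_right]
    ring
  have hder : InnerProductSpace.toDual ℝ 𝔼 (g + (Dr x - Dr y)) =
      InnerProductSpace.toDual ℝ 𝔼 (Dr x) + InnerProductSpace.toDual ℝ 𝔼 (g - Dr y) := by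
    rw [← map_add, add_sub_left_comm]
  rw [hfun, hder]
  exact ((hasGradientAt_iff_hasFDerivAt.mp hr).add
    (InnerProductSpace.toDual ℝ 𝔼 (g - Dr y)).hasFDerivAt).sub_const _

theorem inner_add_sub_le_breg_of_isMinOn {Ω : Set 𝔼} {r : 𝔼 → ℝ} {Dr : 𝔼 → 𝔼} {Ψ : 𝔼 → ℝ}
    {g y x u : 𝔼}
    (hr : HasGradientAt r (Dr x) x) (hΨ : ConvexOn ℝ Ω Ψ)
    (hmin : IsMinOn (fun z => ⟪g, z⟫ + Ψ z + breg r Dr z y) Ω x) (hx : x ∈ Ω) (hu : u ∈ Ω) :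
    ⟪g, x - u⟫ + Ψ x - Ψ u ≤ breg r Dr u y - breg r Dr u x - breg r Dr x y := by
  have hmin' : IsMinOn (fun z => (⟪g, z⟫ + breg r Dr z y) + Ψ z) Ω x := fun z hz => by
    simpa only [Set.mem_ofPred_eq, add_right_comm] using hmin hz
  have hopt := hΨ.sub_le_of_isMinOn_add hmin' (hasFDerivAt_inner_add_breg hr g y) hx hu
  rw [InnerProductSpace.toDual_apply_apply, inner_add_left, ← breg_three_point] at hopt
  rw [← neg_sub u x, inner_neg_right]
  linarith

end Euclidean

theorem stmt_13_general {n : ℕ} (Ω : Set (EuclideanSpace ℝ (Fin n))) (hΩ : Convex ℝ Ω)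
    (Q : Matrix (Fin n) (Fin n) ℝ) (hQ : Q.PosDef)
    (r : EuclideanSpace ℝ (Fin n) → ℝ)
    (Dr : EuclideanSpace ℝ (Fin n) → EuclideanSpace ℝ (Fin n))
    (hdiff : ∀ z, HasGradientAt r (Dr z) z)
    (hstrong : ∀ x ∈ Ω, ∀ y ∈ Ω, (1/2) * quadForm Q (x - y) ≤ breg r Dr x y)
    (Ψ : EuclideanSpace ℝ (Fin n) → ℝ)
    (hΨconv : ConvexOn ℝ Set.univ Ψ)
    (f : EuclideanSpace ℝ (Fin n) → ℝ)
    (xt xhat xnext gt gtilde : EuclideanSpace ℝ (Fin n))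
    (hxt : xt ∈ Ω) (hxhat : xhat ∈ Ω) (hxnext : xnext ∈ Ω)
    (hhat : IsMinOn (fun x => ⟪gtilde, x⟫ + Ψ x + breg r Dr x xt) Ω xhat)
    (hsub : ∀ y ∈ Ω, f xhat + ⟪gt, y - xhat⟫ ≤ f y)
    (hnext : IsMinOn (fun x => ⟪gt, x⟫ + Ψ x + breg r Dr x xt) Ω xnext) :
    ∀ xs ∈ Ω, (f xhat + Ψ xhat) - (f xs + Ψ xs) ≤
      (1/2) * quadForm Q⁻¹ (gt - gtilde) + breg r Dr xs xt - breg r Dr xs xnext := by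
  intro xs hxs
  have hΨ : ConvexOn ℝ Ω Ψ := hΨconv.subset (Set.subset_univ Ω) hΩ
  have hprox_next := inner_add_sub_le_breg_of_isMinOn (hdiff xnext) hΨ hnext hxnext hxs
  have hprox_hat := inner_add_sub_le_breg_of_isMinOn (hdiff xhat) hΨ hhat hxhat hxnext
  have hyoung := inner_le_half_quadForm_inv_add hQ (gt - gtilde) (xhat - xnext)
  rw [← quadForm_neg Q, neg_sub] at hyoung
  have hstrong_next := hstrong xnext hxnext xhat hxhat
  have hbreg_hat := breg_nonneg_of_strongConvex hQ.posSemidef hstrong hxhat hxt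
  have hsub_xs := hsub xs hxs
  simp only [inner_sub_left, inner_sub_right] at hprox_next hprox_hat hyoung hsub_xs
  linarith

theorem stmt_13 {n : ℕ} (Ω : Set (EuclideanSpace ℝ (Fin n))) (hΩ : Convex ℝ Ω)
    (Q : Matrix (Fin n) (Fin n) ℝ) (hQ : Q.PosDef)
    (r : EuclideanSpace ℝ (Fin n) → ℝ)
    (Dr : EuclideanSpace ℝ (Fin n) → EuclideanSpace ℝ (Fin n))
    (hdiff : ∀ z, HasGradientAt r (Dr z) z)
    (hstrong : ∀ x ∈ Ω, ∀ y ∈ Ω, (1/2) * quadForm Q (x - y) ≤ breg r Dr x y)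
    (Ψ : EuclideanSpace ℝ (Fin n) → ℝ)
    (hΨconv : ConvexOn ℝ Set.univ Ψ) (hΨdiff : Differentiable ℝ Ψ)
    (f : EuclideanSpace ℝ (Fin n) → ℝ)
    (xt xhat xnext gt gtilde : EuclideanSpace ℝ (Fin n))
    (hxt : xt ∈ Ω) (hxhat : xhat ∈ Ω) (hxnext : xnext ∈ Ω)
    (hhat : IsMinOn (fun x => ⟪gtilde, x⟫ + Ψ x + breg r Dr x xt) Ω xhat)
    (hsub : ∀ y ∈ Ω, f xhat + ⟪gt, y - xhat⟫ ≤ f y)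
    (hnext : IsMinOn (fun x => ⟪gt, x⟫ + Ψ x + breg r Dr x xt) Ω xnext) :
    ∀ xs ∈ Ω, (f xhat + Ψ xhat) - (f xs + Ψ xs) ≤
      (1/2) * quadForm Q⁻¹ (gt - gtilde) + breg r Dr xs xt - breg r Dr xs xnext :=
  stmt_13_general Ω hΩ Q hQ r Dr hdiff hstrong Ψ hΨconv f xt xhat xnext gt gtilde hxt hxhat hxnext
    hhat hsub hnext
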